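/- arXiv:2509.08725 — 2 statements merged into one kernel-verified Lean document; each statement's English description precedes it below -/
import Mathlib

section
/- Let G be a group, N a normal subgroup, H a subgroup with N ∩ H = {1} and NH = G, and let pr_H : G → H be the projection defined by the unique decomposition γ = νη with ν ∈ N, η ∈ H. Let G act freely on the right on a set P, and let G act on the left on the coset space G/H by left translation. Suppose ũ : P → G/H satisfies ũ(p·g) = g⁻¹•ũ(p) for all p ∈ P, g ∈ G. Then there exists a map u : P → G such that u(p)·H = ũ(p) for all p, and u(p·g) = g⁻¹·u(p)·pr_H(g) for all p ∈ P and g ∈ G. -/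
/-- Let `N ⊴ G`, `H ≤ G` with `N ∩ H = {1}` and `NH = G`, and let
`pr_H : G → H` be the projection from the unique decomposition. Let `G` act freely on the
right on `P`, and let `ũ : P → G/H` satisfy `ũ (p·g) = g⁻¹ • ũ p`. Then there exists a
lift `u : P → G` of `ũ` satisfying `u (p·g) = g⁻¹ * u p * pr_H g`. -/
theorem statement8 {G P : Type*} [Group G] (N H : Subgroup G) (hN : N.Normal)
    (hNH : N ⊓ H = ⊥)
    (hgen : ∀ γ : G, ∃ ν ∈ N, ∃ η ∈ H, γ = ν * η)
    (prH : G → G)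
    (hprH : ∀ γ : G, prH γ ∈ H ∧ γ * (prH γ)⁻¹ ∈ N)
    (act : P → G → P)
    (act_one : ∀ p, act p 1 = p)
    (act_mul : ∀ (p : P) (g g' : G), act p (g * g') = act (act p g) g')
    (hfree : ∀ (p : P) (g : G), act p g = p → g = 1)
    (ut : P → G ⧸ H)
    (hut : ∀ (p : P) (g : G), ut (act p g) = g⁻¹ • ut p) :
    ∃ u : P → G,
      (∀ p : P, (u p : G ⧸ H) = ut p) ∧
      (∀ (p : P) (g : G), u (act p g) = g⁻¹ * u p * prH g) := by
  classical
  -- prH is the unique decomposition projection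
  have prH_unique : ∀ γ h : G, h ∈ H → γ * h⁻¹ ∈ N → prH γ = h := by
    intro γ h hh hn
    have h1 := (hprH γ).1
    have h2 := (hprH γ).2
    have hmem : prH γ * h⁻¹ ∈ N ⊓ H := by
      constructor
      · have : prH γ * h⁻¹ = (γ * (prH γ)⁻¹)⁻¹ * (γ * h⁻¹) := by group
        rw [this]; exact N.mul_mem (N.inv_mem h2) hn
      · exact H.mul_mem h1 (H.inv_mem hh)
    rw [hNH, Subgroup.mem_bot] at hmem
    have := mul_inv_eq_one.mp hmem
    exact this
  have prH_mul : ∀ g g' : G, prH (g * g') = prH g * prH g' := by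
    intro g g'
    apply prH_unique
    · exact H.mul_mem (hprH g).1 (hprH g').1
    · have : g * g' * (prH g * prH g')⁻¹ =
        (g * (prH g)⁻¹) * (prH g * (g' * (prH g')⁻¹) * (prH g)⁻¹) := by group
      rw [this]
      exact N.mul_mem (hprH g).2 (hN.conj_mem _ (hprH g').2 _)
  -- orbit setoid
  let s : Setoid P := ⟨fun p q => ∃ g, act p g = q,
    ⟨fun p => ⟨1, act_one p⟩,
     by rintro p q ⟨g, rfl⟩; exact ⟨g⁻¹, by rw [← act_mul, mul_inv_cancel, act_one]⟩,
     by rintro p q r ⟨g, rfl⟩ ⟨g', rfl⟩; exact ⟨g * g', act_mul p g g'⟩⟩⟩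
  let rep : P → P := fun p => (Quotient.mk s p).out
  have hrep : ∀ p : P, ∃ g : G, act (rep p) g = p := fun p =>
    Quotient.exact (Quotient.out_eq (Quotient.mk s p))
  let gp : P → G := fun p => Classical.choose (hrep p)
  have hgp : ∀ p : P, act (rep p) (gp p) = p := fun p => Classical.choose_spec (hrep p)
  have gp_unique : ∀ (p : P) (a : G), act (rep p) a = p → a = gp p := by
    intro p a ha
    have hx : act (act (rep p) (gp p)) ((gp p)⁻¹ * a) = act (rep p) (gp p) := by
      rw [← act_mul, mul_inv_cancel_left, ha, hgp]
    have := hfree _ _ hx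
    have := inv_mul_eq_one.mp this
    exact this.symm
  have rep_act : ∀ (p : P) (g : G), rep (act p g) = rep p := by
    intro p g
    have : Quotient.mk s (act p g) = Quotient.mk s p :=
      Quotient.sound ⟨g⁻¹, by rw [← act_mul, mul_inv_cancel, act_one]⟩
    simp only [rep, this]
  refine ⟨fun p => (gp p)⁻¹ * (ut (rep p)).out * prH (gp p), ?_, ?_⟩
  · intro p
    have h1 : ((((gp p)⁻¹ * (ut (rep p)).out * prH (gp p) : G)) : G ⧸ H)
        = (((gp p)⁻¹ * (ut (rep p)).out : G) : G ⧸ H) := by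
      exact QuotientGroup.mk_mul_of_mem ((gp p)⁻¹ * (ut (rep p)).out) (hprH (gp p)).1
    rw [h1]
    have h2 : (((gp p)⁻¹ * (ut (rep p)).out : G) : G ⧸ H) = (gp p)⁻¹ • ut (rep p) := by
      have := MulAction.Quotient.mk_smul_out H ((gp p)⁻¹) (ut (rep p))
      rw [smul_eq_mul] at this
      exact this
    rw [h2, ← hut, hgp]
  · intro p g
    have hr : rep (act p g) = rep p := rep_act p g
    have hg : gp (act p g) = gp p * g := by
      refine (gp_unique (act p g) (gp p * g) ?_).symm
      rw [hr, act_mul, hgp]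
    simp only [hr, hg, prH_mul]
    group
end

section
/- Let G be a group acting on the right on a set P and let K be a subgroup of G. Suppose u : P → G satisfies u(p·k) = k⁻¹·u(p) for all p ∈ P, k ∈ K, and κ : P → K satisfies κ(p·k) = k⁻¹·κ(p)·k for all p ∈ P, k ∈ K. Define φ_u : P → P by φ_u(p) := p·u(p) and Φ_κ : P → P by Φ_κ(p) := p·κ(p). Then φ_u ∘ Φ_κ = φ_u. -/
/-- Let `G` act on the right on `P` and `K ≤ G`. If `u : P → G` is a
dressing field (`u (p·k) = k⁻¹ * u p` for `k ∈ K`) and `κ : P → K` is an element of the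
gauge subgroup (`κ (p·k) = k⁻¹ * κ p * k` for `k ∈ K`), then with `φ_u (p) = p · u p` and
`Φ_κ (p) = p · κ p` one has `φ_u ∘ Φ_κ = φ_u`. -/
theorem statement11 {G P : Type*} [Group G] (act : P → G → P)
    (act_one : ∀ p, act p 1 = p)
    (act_mul : ∀ (p : P) (g g' : G), act p (g * g') = act (act p g) g')
    (K : Subgroup G)
    (u : P → G)
    (hu : ∀ (p : P), ∀ k ∈ K, u (act p k) = k⁻¹ * u p)
    (κ : P → G)
    (hκK : ∀ p : P, κ p ∈ K)
    (hκ : ∀ (p : P), ∀ k ∈ K, κ (act p k) = k⁻¹ * κ p * k) :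
    ∀ p : P, act (act p (κ p)) (u (act p (κ p))) = act p (u p) := by
  intro p
  rw [hu p (κ p) (hκK p), ← act_mul, mul_inv_cancel_left]
end
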